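/- Let 𝔐 = (M, ⊨, P(L)) be an abstract model structure with L infinite and let S = (L, ⊢) be the logical structure induced by 𝔐. The following are equivalent: (i) spECQ-sat holds in 𝔐; (ii) there exists φ ∈ L such that {φ} is not satisfiable, and for every satisfiable Γ ⊊ L there exists γ ∈ L such that Γ∪{γ} ⊊ L and Γ∪{γ} is not satisfiable; (iii) there exists φ ∈ L such that {φ} is not satisfiable, pfECQ-sat holds in 𝔐, and for all Γ ⊊ L and all α ∈ L there exists β ∈ L such that Γ∪{β} ⊢ α. -/

import Mathlib

open Set

/-- A set `Γ ⊆ L` is satisfiable in the amst given by `sat` if some model satisfies it. -/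
def AmstSatisfiable {M L : Type*} (sat : M → Set L → Prop) (Γ : Set L) : Prop :=
  ∃ m : M, sat m Γ

/-- `Γ` is finitely satisfiable if every finite subset of `Γ` is satisfiable. -/
def AmstFinSatisfiable {M L : Type*} (sat : M → Set L → Prop) (Γ : Set L) : Prop :=
  ∀ Δ : Set L, Δ ⊆ Γ → Δ.Finite → AmstSatisfiable sat Δ

/-- An amst is compact if satisfiability and finite satisfiability coincide. -/
def AmstCompact {M L : Type*} (sat : M → Set L → Prop) : Prop :=
  ∀ Γ : Set L, AmstSatisfiable sat Γ ↔ AmstFinSatisfiable sat Γ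

/-- `ModOf sat Γ` is the set of models satisfying `Γ`. -/
def ModOf {M L : Type*} (sat : M → Set L → Prop) (Γ : Set L) : Set M :=
  {m : M | sat m Γ}

/-- The consequence relation of the logical structure induced by the amst:
`Γ ⊢ α` iff `Mod(Γ) ⊆ Mod({α})`. -/
def Entails {M L : Type*} (sat : M → Set L → Prop) (Γ : Set L) (α : L) : Prop :=
  ModOf sat Γ ⊆ ModOf sat ({α} : Set L)

/-- A logical structure (given by its consequence relation) is finitary. -/
def IsFinitary {L : Type*} (turn : Set L → L → Prop) : Prop :=
  ∀ (Γ : Set L) (α : L), turn Γ α → ∃ Γ' : Set L, Γ' ⊆ Γ ∧ Γ'.Finite ∧ turn Γ' α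

/-- An amst is normal if satisfaction of a set is equivalent to satisfaction of
each of its singletons. -/
def AmstNormal {M L : Type*} (sat : M → Set L → Prop) : Prop :=
  ∀ (m : M) (Γ : Set L), sat m Γ ↔ ∀ α ∈ Γ, sat m ({α} : Set L)

/-- The anti-model structure relative to `Λ`: domain `M \ Mod(Λ)`, satisfaction restricted. -/
def AntiSat {M L : Type*} (sat : M → Set L → Prop) (Λ : Set L) :
    {m : M // m ∉ ModOf sat Λ} → Set L → Prop :=
  fun m Γ => sat m.1 Γ

/-- A set is explosive (trivial) in a logical structure if it entails everything. -/
def IsExplosive {L : Type*} (turn : Set L → L → Prop) (Γ : Set L) : Prop :=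
  ∀ γ : L, turn Γ γ

/-- gECQ for a logical structure. -/
def GECQ {L : Type*} (turn : Set L → L → Prop) : Prop :=
  ∀ α : L, ∃ β : L, IsExplosive turn ({α, β} : Set L)

/-- sECQ for a logical structure. -/
def SECQ {L : Type*} (turn : Set L → L → Prop) : Prop :=
  ∀ α : L, ∃ Γ : Set L, Γ ∪ {α} ≠ univ ∧ IsExplosive turn (Γ ∪ {α})

/-- spECQ for a logical structure. -/
def SPECQ {L : Type*} (turn : Set L → L → Prop) : Prop :=
  ∀ Γ : Set L, Γ ≠ univ → ∃ α : L, Γ ∪ {α} ≠ univ ∧ IsExplosive turn (Γ ∪ {α})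

/-- pfECQ for a logical structure. -/
def PFECQ {L : Type*} (turn : Set L → L → Prop) : Prop :=
  ∀ Γ : Set L, Γ ≠ univ → ∃ Δ : Set L, Δ ≠ univ ∧ Γ ⊆ Δ ∧ IsExplosive turn Δ

/-- gECQ-sat for an amst. -/
def GECQsat {M L : Type*} (sat : M → Set L → Prop) : Prop :=
  ∀ α : L, ∃ β : L, ¬ AmstSatisfiable sat ({α, β} : Set L)

/-- sECQ-sat for an amst. -/
def SECQsat {M L : Type*} (sat : M → Set L → Prop) : Prop :=
  ∀ α : L, ∃ Γ : Set L, Γ ∪ {α} ≠ univ ∧ ¬ AmstSatisfiable sat (Γ ∪ {α})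

/-- spECQ-sat for an amst. -/
def SPECQsat {M L : Type*} (sat : M → Set L → Prop) : Prop :=
  ∀ Γ : Set L, Γ ≠ univ → ∃ α : L, Γ ∪ {α} ≠ univ ∧ ¬ AmstSatisfiable sat (Γ ∪ {α})

/-- pfECQ-sat for an amst. -/
def PFECQsat {M L : Type*} (sat : M → Set L → Prop) : Prop :=
  ∀ Γ : Set L, Γ ≠ univ → ∃ Δ : Set L, Δ ≠ univ ∧ Γ ⊆ Δ ∧ ¬ AmstSatisfiable sat Δ

/-- gECQ-finsat for an amst. -/
def GECQfinsat {M L : Type*} (sat : M → Set L → Prop) : Prop :=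
  ∀ α : L, ∃ β : L, ¬ AmstFinSatisfiable sat ({α, β} : Set L)

/-- sECQ-finsat for an amst. -/
def SECQfinsat {M L : Type*} (sat : M → Set L → Prop) : Prop :=
  ∀ α : L, ∃ Γ : Set L, Γ ∪ {α} ≠ univ ∧ ¬ AmstFinSatisfiable sat (Γ ∪ {α})

/-- spECQ-finsat for an amst. -/
def SPECQfinsat {M L : Type*} (sat : M → Set L → Prop) : Prop :=
  ∀ Γ : Set L, Γ ≠ univ → ∃ α : L, Γ ∪ {α} ≠ univ ∧ ¬ AmstFinSatisfiable sat (Γ ∪ {α})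

/-- pfECQ-finsat for an amst. -/
def PFECQfinsat {M L : Type*} (sat : M → Set L → Prop) : Prop :=
  ∀ Γ : Set L, Γ ≠ univ → ∃ Δ : Set L, Δ ≠ univ ∧ Γ ⊆ Δ ∧ ¬ AmstFinSatisfiable sat Δ

/-- `Σ'` is satisfiable relative to a collection `K` of subsets of `L` if every
subset of `Σ'` belonging to `K` is satisfiable. -/
def KSatisfiable {M L : Type*} (sat : M → Set L → Prop) (K : Set (Set L)) (S : Set L) : Prop :=
  ∀ Δ : Set L, Δ ⊆ S → Δ ∈ K → AmstSatisfiable sat Δ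

/-- The principal ultrafilter on `I` generated by `s` (as a family of subsets of `I`). -/
def PrincipalUF {L : Type*} (I : Set L) (s : L) : Set (Set L) :=
  {X : Set L | X ⊆ I ∧ s ∈ X}

/-!
spECQ-sat is only a constraint on satisfiable sets: an unsatisfiable `Γ ⊊ L` already
has `Γ ∪ {γ} = Γ` for any `γ ∈ Γ`, and `Γ = ∅` is handled by an unsatisfiable
singleton. For (iii), choose `β` with `Γ ∪ {β} ⊢ φ`, so `Γ ∪ {β}` is unsatisfiable;
the only way this can fail to witness spECQ-sat is `Γ = L \ {β}`, and then the only
proper superset of `Γ` is `Γ` itself, so pfECQ-sat makes `Γ` unsatisfiable.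
-/

theorem Set.eq_of_subset_of_union_singleton_eq_univ {L : Type*} {Γ Δ : Set L} {β : L}
    (hU : Γ ∪ {β} = univ) (hΓΔ : Γ ⊆ Δ) (hΔ : Δ ≠ univ) : Δ = Γ := by
  refine Subset.antisymm (fun x hx => ?_) hΓΔ
  have hβ : β ∉ Δ := fun hβ =>
    hΔ (eq_univ_of_univ_subset (hU ▸ union_subset hΓΔ (singleton_subset_iff.2 hβ)))
  rcases (hU ▸ mem_univ x : x ∈ Γ ∪ {β}) with hxΓ | rfl
  · exact hxΓ
  · exact absurd hx hβ

section Amst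

variable {M L : Type*} {sat : M → Set L → Prop}

theorem not_amstSatisfiable_of_entails {Γ : Set L} {α : L} (h : Entails sat Γ α)
    (hα : ¬ AmstSatisfiable sat {α}) : ¬ AmstSatisfiable sat Γ :=
  fun ⟨m, hm⟩ => hα ⟨m, h hm⟩

theorem entails_of_not_amstSatisfiable {Γ : Set L} (hΓ : ¬ AmstSatisfiable sat Γ) (α : L) :
    Entails sat Γ α :=
  fun m hm => (hΓ ⟨m, hm⟩).elim

theorem SPECQsat.exists_not_amstSatisfiable_singleton [Nonempty L] (h : SPECQsat sat) :
    ∃ φ : L, ¬ AmstSatisfiable sat {φ} := by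
  obtain ⟨φ, -, hφ⟩ := h ∅ empty_ne_univ
  exact ⟨φ, by rwa [empty_union] at hφ⟩

theorem SPECQsat.pfecqSat (h : SPECQsat sat) : PFECQsat sat := fun Γ hΓ =>
  let ⟨α, hne, hα⟩ := h Γ hΓ
  ⟨Γ ∪ {α}, hne, subset_union_left, hα⟩

theorem exists_union_singleton_not_amstSatisfiable [Nontrivial L] {φ : L}
    (hφ : ¬ AmstSatisfiable sat {φ}) {Γ : Set L} (hΓ : Γ ≠ univ)
    (hs : ¬ AmstSatisfiable sat Γ) :
    ∃ γ : L, Γ ∪ {γ} ≠ univ ∧ ¬ AmstSatisfiable sat (Γ ∪ {γ}) := by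
  rcases Γ.eq_empty_or_nonempty with rfl | ⟨γ, hγ⟩
  · refine ⟨φ, ?_, ?_⟩ <;> rw [empty_union]
    exacts [singleton_ne_univ φ, hφ]
  · have hΓγ : Γ ∪ {γ} = Γ := by rw [union_singleton, insert_eq_of_mem hγ]
    exact ⟨γ, by rwa [hΓγ], by rwa [hΓγ]⟩

theorem specqSat_iff_forall_amstSatisfiable [Nontrivial L] :
    SPECQsat sat ↔ (∃ φ : L, ¬ AmstSatisfiable sat {φ}) ∧
      ∀ Γ : Set L, Γ ≠ univ → AmstSatisfiable sat Γ →
        ∃ γ : L, Γ ∪ {γ} ≠ univ ∧ ¬ AmstSatisfiable sat (Γ ∪ {γ}) := by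
  refine ⟨fun h => ⟨h.exists_not_amstSatisfiable_singleton, fun Γ hΓ _ => h Γ hΓ⟩, ?_⟩
  rintro ⟨⟨φ, hφ⟩, hsat⟩ Γ hΓ
  by_cases hs : AmstSatisfiable sat Γ
  · exact hsat Γ hΓ hs
  · exact exists_union_singleton_not_amstSatisfiable hφ hΓ hs

theorem specqSat_iff_pfecqSat_and_entails [Nontrivial L] :
    SPECQsat sat ↔ (∃ φ : L, ¬ AmstSatisfiable sat {φ}) ∧ PFECQsat sat ∧
      ∀ Γ : Set L, Γ ≠ univ → ∀ α : L, ∃ β : L, Entails sat (Γ ∪ {β}) α := by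
  refine ⟨fun h => ⟨h.exists_not_amstSatisfiable_singleton, h.pfecqSat, fun Γ hΓ α => ?_⟩, ?_⟩
  · obtain ⟨β, -, hβ⟩ := h Γ hΓ
    exact ⟨β, entails_of_not_amstSatisfiable hβ α⟩
  rintro ⟨⟨φ, hφ⟩, hpf, hent⟩ Γ hΓ
  obtain ⟨β, hβ⟩ := hent Γ hΓ φ
  by_cases hU : Γ ∪ {β} = univ
  · obtain ⟨Δ, hΔ, hΓΔ, hΔs⟩ := hpf Γ hΓ
    rw [Set.eq_of_subset_of_union_singleton_eq_univ hU hΓΔ hΔ] at hΔs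
    exact exists_union_singleton_not_amstSatisfiable hφ hΓ hΔs
  · exact ⟨β, hU, not_amstSatisfiable_of_entails hβ hφ⟩

end Amst

theorem specqSat_characterization_general {M L : Type*} [Infinite L]
    (sat : M → Set L → Prop) :
    (SPECQsat sat ↔
      ((∃ φ : L, ¬ AmstSatisfiable sat ({φ} : Set L)) ∧
        ∀ Γ : Set L, Γ ≠ univ → AmstSatisfiable sat Γ →
          ∃ γ : L, Γ ∪ {γ} ≠ univ ∧ ¬ AmstSatisfiable sat (Γ ∪ {γ}))) ∧
    (SPECQsat sat ↔
      ((∃ φ : L, ¬ AmstSatisfiable sat ({φ} : Set L)) ∧ PFECQsat sat ∧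
        ∀ Γ : Set L, Γ ≠ univ → ∀ α : L, ∃ β : L, Entails sat (Γ ∪ {β}) α)) :=
  ⟨specqSat_iff_forall_amstSatisfiable, specqSat_iff_pfecqSat_and_entails⟩

/-- characterization of spECQ-sat. -/
theorem specqSat_characterization {M L : Type*} [Nonempty M] [Infinite L]
    (sat : M → Set L → Prop) :
    (SPECQsat sat ↔
      ((∃ φ : L, ¬ AmstSatisfiable sat ({φ} : Set L)) ∧
        ∀ Γ : Set L, Γ ≠ univ → AmstSatisfiable sat Γ →
          ∃ γ : L, Γ ∪ {γ} ≠ univ ∧ ¬ AmstSatisfiable sat (Γ ∪ {γ}))) ∧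
    (SPECQsat sat ↔
      ((∃ φ : L, ¬ AmstSatisfiable sat ({φ} : Set L)) ∧ PFECQsat sat ∧
        ∀ Γ : Set L, Γ ≠ univ → ∀ α : L, ∃ β : L, Entails sat (Γ ∪ {β}) α)) :=
  specqSat_characterization_general sat
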